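/- For every integer n ≥ 2, the linear coefficient of the Kazhdan–Lusztig polynomial of the braid matroid B_n equals S(n,2) − S(n,n−1) = 2^{n−1} − 1 − n(n−1)/2. -/

import Mathlib

/-! Compare the coefficients of `t^{n-2}` in the defining recursion. A flat `F` with `k ≥ 3`
blocks contributes nothing, since `deg χ((Bₙ)_F) ≤ n - k` and `deg P_k < (k - 1)/2`. The top flat
contributes `∑ μ(⊥, x)` over the atoms `x` of `P(n)`, the partitions with `n - 1` blocks, i.e.
`-S(n, n-1)`; each of the `S(n, 2)` two-block flats contributes the constant term of `P₂`, which
the case `n = 2` shows to be `1`. Finally `S(n, 2) = 2^{n-1} - 1`, since a two-block partition is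
determined by the block missing a fixed point, and `S(n, n-1) = C(n, 2)`, since a partition with
`n - 1` blocks is determined by its two-element block. -/

open Finset Polynomial Nat
open scoped Classical

noncomputable instance instPLlfo (n : ℕ) :
    LocallyFiniteOrder (Finpartition (Finset.univ : Finset (Fin n))) :=
  Fintype.toLocallyFiniteOrder

/-- The partition lattice `P(n)`: set partitions of an `n`-element set, ordered by refinement. -/
abbrev PL (n : ℕ) := Finpartition (Finset.univ : Finset (Fin n))

/-- The Möbius function of the partition lattice. -/
noncomputable def mob {n : ℕ} (x y : PL n) : ℤ := IncidenceAlgebra.mu ℤ x y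

/-- The characteristic polynomial of `P(n)`.  `P(n)` is graded of rank `n - 1`, a partition `x`
with `k` blocks having rank `n - k`, so the term of `x` is `μ(⊥,x) t^{(n-1)-(n-k)} = μ(⊥,x) t^{k-1}`. -/
noncomputable def chiP (n : ℕ) : Polynomial ℤ :=
  ∑ x : PL n, C (mob ⊥ x) * X ^ (x.parts.card - 1)

/-- Signed Stirling numbers of the first kind: `t(t-1)⋯(t-n+1) = ∑ₖ s(n,k) tᵏ`. -/
noncomputable def s1 (n k : ℕ) : ℤ :=
  (∏ i ∈ Finset.range n, (X - C (i : ℤ))).coeff k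

/-- Stirling numbers of the second kind: the number of set partitions of an
`n`-set into exactly `k` blocks. -/
noncomputable def S2 (n k : ℕ) : ℕ :=
  Nat.card {P : PL n // P.parts.card = k}

/-- `m(λ)`: the number of set partitions of `{1,…,n}` whose multiset of block sizes is the
number partition `λ ⊢ n`. -/
noncomputable def numOfType (n : ℕ) (l : n.Partition) : ℕ :=
  Nat.card {P : PL n // P.parts.val.map Finset.card = l.parts}

/-- The characteristic polynomial of the lower interval (localization) `[⊥, F]` in `P(n)`;
the interval is graded with `rk x = n - ℓ(x)`, of total rank `(n - ℓ(F)) `, so the term of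
`x ≤ F` is `μ(⊥,x) t^{(n-ℓ(F)) - (n-ℓ(x))} = μ(⊥,x) t^{ℓ(x)-ℓ(F)}`. -/
noncomputable def chiLow (n : ℕ) (F : PL n) : Polynomial ℤ :=
  ∑ x ∈ Finset.univ.filter (fun x : PL n => x ≤ F),
    C (mob ⊥ x) * X ^ (x.parts.card - F.parts.card)

/-- `IsBraidKL P` says that `P n` is the Kazhdan–Lusztig polynomial of the braid matroid `Bₙ`
(whose lattice of flats is `P(n)`, of rank `n - 1`): it is `1` in rank `0`, has degree `< rk/2`
in positive rank, and satisfies the defining recursion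
`t^{rk} Pₙ(1/t) = ∑_F χ((Bₙ)_F, t) · P((Bₙ)^F, t)`, where the upper interval at a flat `F`
with `ℓ(F)` blocks is the partition lattice `P(ℓ(F))`. -/
def IsBraidKL (P : ℕ → Polynomial ℤ) : Prop :=
  (∀ n, n ≤ 1 → P n = 1) ∧
  (∀ n, 2 ≤ n → 2 * (P n).natDegree < n - 1) ∧
  (∀ n, 2 ≤ n →
    (P n).reflect (n - 1) = ∑ F : PL n, chiLow n F * P F.parts.card)

namespace Finpartition

variable {α : Type*} [DecidableEq α] {s c : Finset α} {P Q : Finpartition s}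

lemma part_subset_of_le (h : P ≤ Q) (hc : c ∈ Q.parts) {a : α} (ha : a ∈ c) : P.part a ⊆ c := by
  have has : a ∈ s := Q.subset hc ha
  obtain ⟨d, hd, hsub⟩ := h (P.part_mem.2 has)
  rwa [← Q.eq_of_mem_parts hd hc (hsub (P.mem_part_self.2 has)) ha]

lemma card_parts_eq_sum_card_filter_subset (h : P ≤ Q) :
    #P.parts = ∑ c ∈ Q.parts, #(P.parts.filter (· ⊆ c)) := by
  rw [← card_biUnion]
  · congr 1
    ext b
    simp only [mem_biUnion, mem_filter]
    refine ⟨fun hb => ?_, fun ⟨_, _, hb, _⟩ => hb⟩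
    obtain ⟨c, hc, hbc⟩ := h hb
    exact ⟨c, hc, hb, hbc⟩
  · intro c hc c' hc' hne
    simp only [Function.onFun, disjoint_left, mem_filter]
    rintro b ⟨hb, hbc⟩ ⟨-, hbc'⟩
    obtain ⟨a, ha⟩ := P.nonempty_of_mem_parts hb
    exact hne (Q.eq_of_mem_parts hc hc' (hbc ha) (hbc' ha))

lemma card_parts_lt_of_lt (h : P < Q) : #Q.parts < #P.parts := by
  obtain ⟨c, hc, hcP⟩ : ∃ c ∈ Q.parts, ∀ b ∈ P.parts, ¬c ⊆ b := by
    by_contra! hQP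
    exact h.not_ge hQP
  obtain ⟨a, ha⟩ := Q.nonempty_of_mem_parts hc
  have has : a ∈ s := Q.subset hc ha
  obtain ⟨a', ha', ha'P⟩ := not_subset.1 (hcP _ (P.part_mem.2 has))
  have has' : a' ∈ s := Q.subset hc ha'
  have hsplit : 1 < #(P.parts.filter (· ⊆ c)) := one_lt_card.2
    ⟨P.part a, mem_filter.2 ⟨P.part_mem.2 has, part_subset_of_le h.le hc ha⟩,
     P.part a', mem_filter.2 ⟨P.part_mem.2 has', part_subset_of_le h.le hc ha'⟩,
     fun heq => ha'P (heq ▸ P.mem_part_self.2 has')⟩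
  rw [card_parts_eq_sum_card_filter_subset h.le, card_eq_sum_ones]
  refine sum_lt_sum (fun c hc => ?_) ⟨c, hc, hsplit⟩
  obtain ⟨a, ha⟩ := Q.nonempty_of_mem_parts hc
  exact card_pos.2 ⟨P.part a, mem_filter.2
    ⟨P.part_mem.2 (Q.subset hc ha), part_subset_of_le h.le hc ha⟩⟩

lemma eq_of_le_of_card_parts_eq (h : P ≤ Q) (hcard : #P.parts = #Q.parts) : P = Q :=
  h.eq_of_not_lt fun hlt => (card_parts_lt_of_lt hlt).ne' hcard

lemma eq_bot_of_card_parts_eq (h : #P.parts = #s) : P = ⊥ :=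
  (eq_of_le_of_card_parts_eq bot_le (by rw [card_bot, h])).symm

lemma le_of_card_parts_eq_one (h : #Q.parts = 1) : P ≤ Q := by
  obtain ⟨c, hc⟩ := card_eq_one.1 h
  have hcs : c = s := by simpa [hc] using Q.sup_parts
  exact fun b hb => ⟨c, by simp [hc], hcs ▸ P.subset hb⟩

lemma bot_covBy_of_card_parts_eq_card_sub_one (hs : s.Nonempty) (h : #P.parts = #s - 1) :
    ⊥ ⋖ P := by
  refine ⟨bot_lt_iff_ne_bot.2 fun hP => ?_, fun Q hQ hQP => ?_⟩
  · rw [hP, card_bot] at h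
    have := hs.card_pos
    omega
  · have h₁ := card_parts_lt_of_lt hQ
    have h₂ := card_parts_lt_of_lt hQP
    rw [card_bot] at h₁
    omega

lemma natCard_card_parts_eq_one (hs : s.Nonempty) :
    Nat.card {P : Finpartition s // #P.parts = 1} = 1 := by
  have : Subsingleton {P : Finpartition s // #P.parts = 1} := ⟨fun P Q =>
    Subtype.ext (le_antisymm (le_of_card_parts_eq_one Q.2) (le_of_card_parts_eq_one P.2))⟩
  exact Nat.card_eq_one_iff_unique.2 ⟨this, ⟨⟨indiscrete hs.ne_empty, by simp⟩⟩⟩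

lemma parts_eq_pair_sdiff (h : #P.parts = 2) (hc : c ∈ P.parts) : P.parts = {c, s \ c} := by
  obtain ⟨d, hd, hdc⟩ := exists_mem_ne (by omega : 1 < #P.parts) c
  have hP : P.parts = {c, d} := (eq_of_subset_of_card_le
    (insert_subset hc (singleton_subset_iff.2 hd)) (by rw [h, card_pair hdc.symm])).symm
  have hcd : c ∪ d = s := by simpa [hP] using P.sup_parts
  have hdisj : Disjoint c d := P.disjoint hc hd hdc.symm
  rw [hP, ← hcd, union_sdiff_cancel_left hdisj]

lemma natCard_card_parts_eq_two {z : α} (hz : z ∈ s) :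
    Nat.card {P : Finpartition s // #P.parts = 2} = 2 ^ (#s - 1) - 1 := by
  have hparts (P : Finpartition s) (hP : #P.parts = 2) :
      P.parts = {s \ (s \ P.part z), s \ P.part z} := by
    rw [Finset.sdiff_sdiff_eq_self (P.part_subset z)]
    exact parts_eq_pair_sdiff hP (P.part_mem.2 hz)
  rw [Nat.card_eq_fintype_card, Fintype.card_subtype, ← card_erase_of_mem hz, ← card_powerset,
    ← card_erase_of_mem (empty_mem_powerset _)]
  refine card_bij (fun P _ => s \ P.part z) (fun P hP => ?_) (fun P hP Q hQ hPQ => ?_)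
    (fun B hB => ?_)
  · rw [mem_filter] at hP
    have hmem : s \ P.part z ∈ P.parts := by
      rw [parts_eq_pair_sdiff hP.2 (P.part_mem.2 hz)]
      exact mem_insert_of_mem (mem_singleton_self _)
    rw [mem_erase, mem_powerset]
    exact ⟨P.ne_empty hmem, fun a ha => mem_erase.2
      ⟨by rintro rfl; exact (mem_sdiff.1 ha).2 (P.mem_part_self.2 hz), (mem_sdiff.1 ha).1⟩⟩
  · rw [mem_filter] at hP hQ
    ext1
    rw [hparts P hP.2, hparts Q hQ.2, hPQ]
  · rw [mem_erase, mem_powerset] at hB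
    have hBs : B ⊆ s := hB.2.trans (erase_subset z s)
    have hzB : z ∈ s \ B := mem_sdiff.2 ⟨hz, fun h => (mem_erase.1 (hB.2 h)).1 rfl⟩
    let P : Finpartition s := (indiscrete (ne_empty_of_mem hzB)).extend hB.1
      sdiff_disjoint (sdiff_union_of_subset hBs)
    have hPz : P.part z = s \ B := part_eq_of_mem _ (by simp [P]) hzB
    refine ⟨P, mem_filter.2 ⟨mem_univ _, ?_⟩, ?_⟩
    · simp only [P, card_extend, indiscrete_parts, card_singleton]
    · rw [hPz, Finset.sdiff_sdiff_eq_self hBs]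

lemma exists_one_lt_card_of_card_parts_lt (h : #P.parts < #s) : ∃ b ∈ P.parts, 1 < #b := by
  by_contra! hP
  rw [← P.sum_card_parts, card_eq_sum_ones] at h
  exact (sum_le_sum hP).not_gt h

lemma natCard_card_parts_eq_card_sub_one (hs : s.Nonempty) :
    Nat.card {P : Finpartition s // #P.parts = #s - 1} = (#s).choose 2 := by
  let merge (p : Finset α) (hp : p ∈ s.powersetCard 2) : Finpartition s :=
    (⊥ : Finpartition (s \ p)).extend
      (card_pos.1 (by rw [(mem_powersetCard.1 hp).2]; omega)).ne_empty sdiff_disjoint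
      (sdiff_union_of_subset (mem_powersetCard.1 hp).1)
  have hmerge (p : Finset α) (hp : p ∈ s.powersetCard 2) : #(merge p hp).parts = #s - 1 := by
    obtain ⟨hps, hp⟩ := mem_powersetCard.1 hp
    have := card_le_card hps
    simp only [merge, card_extend, card_bot, card_sdiff_of_subset hps, hp]
    omega
  rw [Nat.card_eq_fintype_card, Fintype.card_subtype, ← card_powersetCard]
  refine (card_bij merge (fun p hp => mem_filter.2 ⟨mem_univ _, hmerge p hp⟩)
    (fun p hp q hq hpq => ?_) (fun P hP => ?_)).symm
  · have hp' : p ∈ (merge q hq).parts := hpq ▸ mem_insert_self _ _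
    rcases mem_insert.1 hp' with rfl | hbot
    · rfl
    · obtain ⟨a, -, rfl⟩ := mem_bot_iff.1 hbot
      simpa using (mem_powersetCard.1 hp).2
  · rw [mem_filter] at hP
    obtain ⟨b, hb, hb2⟩ := exists_one_lt_card_of_card_parts_lt (P := P) (by
      have := hs.card_pos
      omega)
    obtain ⟨q, hqb, hq⟩ := exists_subset_card_eq (show 2 ≤ #b by omega)
    have hq' : q ∈ s.powersetCard 2 := mem_powersetCard.2 ⟨hqb.trans (P.subset hb), hq⟩
    refine ⟨q, hq', eq_of_le_of_card_parts_eq (fun c hc => ?_) ?_⟩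
    · rcases mem_insert.1 hc with rfl | hbot
      · exact ⟨b, hb, hqb⟩
      · obtain ⟨a, ha, rfl⟩ := mem_bot_iff.1 hbot
        exact ⟨P.part a, P.part_mem.2 (mem_sdiff.1 ha).1,
          singleton_subset_iff.2 (P.mem_part_self.2 (mem_sdiff.1 ha).1)⟩
    · rw [hmerge q hq', hP.2]

end Finpartition

lemma IncidenceAlgebra.mu_eq_neg_one_of_covBy {𝕜 α : Type*} [AddCommGroup 𝕜] [One 𝕜]
    [PartialOrder α] [LocallyFiniteOrder α] [DecidableEq α] {a b : α} (h : a ⋖ b) :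
    IncidenceAlgebra.mu 𝕜 a b = -1 := by
  have hIco : Finset.Ico a b = {a} := Finset.coe_inj.1 (by rw [coe_Ico, coe_singleton, h.Ico_eq])
  rw [IncidenceAlgebra.mu_eq_neg_sum_Ico_of_ne h.lt.ne, hIco, sum_singleton,
    IncidenceAlgebra.mu_self]

section PartitionLattice

variable {n : ℕ}

lemma univ_nonempty_of_one_le (hn : 1 ≤ n) : (univ : Finset (Fin n)).Nonempty :=
  ⟨⟨0, hn⟩, mem_univ _⟩

lemma card_parts_le (x : PL n) : #x.parts ≤ n := by
  simpa using x.card_parts_le_card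

lemma one_le_card_parts (hn : 1 ≤ n) (x : PL n) : 1 ≤ #x.parts :=
  card_pos.2 (x.parts_nonempty (univ_nonempty_of_one_le hn).ne_empty)

lemma card_filter_card_parts_eq (k : ℕ) :
    #(univ.filter fun x : PL n => #x.parts = k) = S2 n k := by
  rw [S2, Nat.card_eq_fintype_card, Fintype.card_subtype]

lemma S2_one (hn : 1 ≤ n) : S2 n 1 = 1 :=
  Finpartition.natCard_card_parts_eq_one (univ_nonempty_of_one_le hn)

lemma S2_two (hn : 1 ≤ n) : S2 n 2 = 2 ^ (n - 1) - 1 := by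
  have h := Finpartition.natCard_card_parts_eq_two (mem_univ (⟨0, hn⟩ : Fin n))
  rwa [Finset.card_univ, Fintype.card_fin] at h

lemma S2_sub_one (hn : 1 ≤ n) : S2 n (n - 1) = n.choose 2 := by
  have h := Finpartition.natCard_card_parts_eq_card_sub_one (univ_nonempty_of_one_le hn)
  rwa [Finset.card_univ, Fintype.card_fin] at h

lemma mob_bot_eq_neg_one (hn : 1 ≤ n) {x : PL n} (hx : #x.parts = n - 1) : mob ⊥ x = -1 := by
  refine IncidenceAlgebra.mu_eq_neg_one_of_covBy
    (Finpartition.bot_covBy_of_card_parts_eq_card_sub_one (univ_nonempty_of_one_le hn) ?_)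
  rwa [Finset.card_univ, Fintype.card_fin]

lemma coeff_chiLow (F : PL n) (m : ℕ) :
    (chiLow n F).coeff m =
      ∑ x ∈ univ.filter (fun x : PL n => x ≤ F ∧ #x.parts - #F.parts = m), mob ⊥ x := by
  rw [chiLow, finsetSum_coeff, sum_filter, sum_filter]
  refine sum_congr rfl fun x _ => ?_
  rw [coeff_C_mul, coeff_X_pow]
  by_cases hx : x ≤ F <;> by_cases hm : #x.parts - #F.parts = m <;>
    simp [hx, hm, eq_comm (a := m)]

lemma natDegree_chiLow_le (F : PL n) : (chiLow n F).natDegree ≤ n - #F.parts :=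
  natDegree_sum_le_of_forall_le _ _ fun x _ =>
    (natDegree_C_mul_X_pow_le _ _).trans (Nat.sub_le_sub_right (card_parts_le x) _)

lemma coeff_chiLow_sub_card_parts (F : PL n) : (chiLow n F).coeff (n - #F.parts) = 1 := by
  have hbot :
      univ.filter (fun x : PL n => x ≤ F ∧ #x.parts - #F.parts = n - #F.parts) = {⊥} := by
    ext x
    simp only [mem_filter, mem_univ, true_and, mem_singleton]
    refine ⟨fun ⟨hxF, hx⟩ => Finpartition.eq_bot_of_card_parts_eq ?_, ?_⟩
    · have := Finpartition.card_mono hxF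
      have := card_parts_le F
      have := card_parts_le x
      rw [Finset.card_univ, Fintype.card_fin]
      omega
    · rintro rfl
      simp
  rw [coeff_chiLow, hbot, sum_singleton, mob, IncidenceAlgebra.mu_self]

lemma coeff_chiLow_of_card_parts_eq_one (hn : 2 ≤ n) {F : PL n} (hF : #F.parts = 1) :
    (chiLow n F).coeff (n - 2) = -(S2 n (n - 1) : ℤ) := by
  have hatoms : univ.filter (fun x : PL n => x ≤ F ∧ #x.parts - #F.parts = n - 2) =
      univ.filter (fun x : PL n => #x.parts = n - 1) := by
    ext x
    have := one_le_card_parts (by omega) x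
    simp only [mem_filter, mem_univ, true_and, hF, Finpartition.le_of_card_parts_eq_one hF]
    omega
  rw [coeff_chiLow, hatoms, sum_eq_card_nsmul fun x hx =>
    mob_bot_eq_neg_one (by omega) (mem_filter.1 hx).2, card_filter_card_parts_eq]
  simp

end PartitionLattice

namespace IsBraidKL

variable {P : ℕ → ℤ[X]} {n : ℕ}

lemma natDegree_two (hP : IsBraidKL P) : (P 2).natDegree = 0 := by
  have := hP.2.1 2 le_rfl
  omega

lemma coeff_chiLow_mul (hP : IsBraidKL P) (hn : 2 ≤ n) (F : PL n) :
    (chiLow n F * P #F.parts).coeff (n - 2) =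
      (if #F.parts = 1 then -(S2 n (n - 1) : ℤ) else 0) +
        (if #F.parts = 2 then (P 2).coeff 0 else 0) := by
  have hF₁ := one_le_card_parts (by omega) F
  have hFn := card_parts_le F
  by_cases h₁ : #F.parts = 1
  · rw [h₁, hP.1 1 le_rfl, mul_one, if_pos rfl, if_neg (by omega), add_zero,
      coeff_chiLow_of_card_parts_eq_one hn h₁]
  by_cases h₂ : #F.parts = 2
  · have hlead := coeff_chiLow_sub_card_parts F
    rw [h₂] at hlead ⊢
    rw [eq_C_of_natDegree_eq_zero hP.natDegree_two, coeff_mul_C, coeff_C_zero, hlead, one_mul]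
    simp
  -- a block count `k ≥ 3` gives degree at most `(n - k) + (k - 2) / 2 < n - 2`
  rw [if_neg h₁, if_neg h₂, add_zero]
  refine coeff_eq_zero_of_natDegree_lt (natDegree_mul_le.trans_lt ?_)
  have := natDegree_chiLow_le F
  have := hP.2.1 #F.parts (by omega)
  omega

lemma coeff_one (hP : IsBraidKL P) (hn : 2 ≤ n) :
    (P n).coeff 1 = S2 n 2 * (P 2).coeff 0 - S2 n (n - 1) := by
  have hrec := congrArg (coeff · (n - 2)) (hP.2.2 n hn)
  simp only [coeff_reflect, finsetSum_coeff] at hrec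
  rw [revAt_le (by omega), show n - 1 - (n - 2) = 1 by omega] at hrec
  rw [hrec, sum_congr rfl fun F _ => hP.coeff_chiLow_mul hn F, sum_add_distrib, ← sum_filter,
    ← sum_filter, sum_const, sum_const, card_filter_card_parts_eq, card_filter_card_parts_eq,
    S2_one (by omega)]
  simp only [one_smul, nsmul_eq_mul]
  ring

lemma coeff_zero_two (hP : IsBraidKL P) : (P 2).coeff 0 = 1 := by
  have h := hP.coeff_one le_rfl
  rw [coeff_eq_zero_of_natDegree_lt (by rw [hP.natDegree_two]; omega), S2_two one_le_two,
    show 2 - 1 = 1 from rfl, S2_one one_le_two] at h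
  norm_num at h
  linarith

end IsBraidKL

/-- the linear coefficient of the Kazhdan–Lusztig polynomial of the braid matroid
`Bₙ` equals `S(n,2) − S(n,n−1) = 2^{n−1} − 1 − n(n−1)/2`. -/
theorem stmt6 (P : ℕ → Polynomial ℤ) (hP : IsBraidKL P) (n : ℕ) (hn : 2 ≤ n) :
    (P n).coeff 1 = (S2 n 2 : ℤ) - S2 n (n - 1) ∧
      (P n).coeff 1 = 2 ^ (n - 1) - 1 - (n : ℤ) * ((n : ℤ) - 1) / 2 := by
  have h := hP.coeff_one hn
  rw [hP.coeff_zero_two, mul_one] at h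
  refine ⟨h, ?_⟩
  rw [h, S2_two (by omega), S2_sub_one (by omega), Nat.choose_two_right,
    Nat.cast_sub Nat.one_le_two_pow]
  push_cast [Int.natCast_div, Nat.cast_sub (show 1 ≤ n by omega)]
  ring
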